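/- arXiv:1405.7874 — 9 statements merged into one kernel-verified Lean document; each statement's English description precedes it below -/
import Mathlib

section
/- For graphs G and H, the lexicographic product G[H] is CIS if and only if both G and H are CIS. -/
open SimpleGraph

variable {V : Type*}

/-- A set of vertices is stable (independent) if no two of its vertices are adjacent. -/
def SimpleGraph.IsStableSet (G : SimpleGraph V) (s : Set V) : Prop :=
  s.Pairwise fun u v => ¬ G.Adj u v

/-- A graph is CIS if every maximal clique and every maximal stable set intersect. -/
def SimpleGraph.IsCIS (G : SimpleGraph V) : Prop :=
  ∀ C S : Set V, Maximal G.IsClique C → Maximal G.IsStableSet S → (C ∩ S).Nonempty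

/-- The lexicographic product of two graphs. -/
def SimpleGraph.lexProd {α β : Type*} (G : SimpleGraph α) (H : SimpleGraph β) :
    SimpleGraph (α × β) where
  Adj p q := G.Adj p.1 q.1 ∨ (p.1 = q.1 ∧ H.Adj p.2 q.2)
  symm := by
    constructor
    rintro p q (h | ⟨h1, h2⟩)
    · exact Or.inl h.symm
    · exact Or.inr ⟨h1.symm, h2.symm⟩
  loopless := by
    constructor
    rintro p (h | ⟨-, h⟩)
    · exact G.irrefl h
    · exact H.irrefl h

/-!
A stable set of `G` is a clique of `Gᶜ`, and `(G[H])ᶜ = Gᶜ[Hᶜ]`. So it suffices to show, for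
any `G, G'` on `α` and `H, H'` on `β`: every maximal clique of `G[H]` meets every maximal
clique of `G'[H']` iff the same holds for `G, G'` and for `H, H'`. Products of maximal cliques
are maximal cliques of `G[H]`, which gives one direction. Conversely, the projection to `α` and
each nonempty fibre of a maximal clique of `G[H]` are maximal cliques of `G` and `H`;
intersecting the projections and then the fibres over a common point yields a common vertex.
-/

namespace SimpleGraph

section Cliques

variable {G G' : SimpleGraph V} {s : Set V}

theorem exists_maximal_isClique (G : SimpleGraph V) : ∃ s, Maximal G.IsClique s :=
  zorn_subset {s | G.IsClique s} fun _ hc hchain =>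
    ⟨_, (Set.pairwise_sUnion hchain.directedOn).2 hc, fun _ => Set.subset_sUnion_of_mem⟩

theorem Maximal.nonempty_of_isClique [Nonempty V] (h : Maximal G.IsClique s) : s.Nonempty := by
  obtain ⟨v⟩ := ‹Nonempty V›
  rw [Set.nonempty_iff_ne_empty]
  rintro rfl
  exact h.2 (G.isClique_singleton v) (Set.empty_subset _) rfl

theorem isStableSet_eq_isClique_compl (G : SimpleGraph V) : G.IsStableSet = Gᶜ.IsClique :=
  funext fun _ => propext (isClique_compl G).symm

def MaximalCliquesMeet (G G' : SimpleGraph V) : Prop :=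
  ∀ C C', Maximal G.IsClique C → Maximal G'.IsClique C' → (C ∩ C').Nonempty

theorem isCIS_iff_maximalCliquesMeet_compl : G.IsCIS ↔ G.MaximalCliquesMeet Gᶜ := by
  rw [IsCIS, isStableSet_eq_isClique_compl]
  rfl

theorem MaximalCliquesMeet.nonempty (h : G.MaximalCliquesMeet G') : Nonempty V := by
  obtain ⟨C, hC⟩ := G.exists_maximal_isClique
  obtain ⟨C', hC'⟩ := G'.exists_maximal_isClique
  obtain ⟨v, -⟩ := h C C' hC hC'
  exact ⟨v⟩

end Cliques

variable {α β : Type*} {G G' : SimpleGraph α} {H H' : SimpleGraph β}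

theorem lexProd_adj {p q : α × β} :
    (G.lexProd H).Adj p q ↔ G.Adj p.1 q.1 ∨ (p.1 = q.1 ∧ H.Adj p.2 q.2) :=
  Iff.rfl

theorem lexProd_adj_same_fst {u : α} {x y : β} :
    (G.lexProd H).Adj (u, x) (u, y) ↔ H.Adj x y := by
  simp [lexProd_adj]

theorem adj_fst_of_lexProd_adj {p q : α × β} (h : (G.lexProd H).Adj p q) (hne : p.1 ≠ q.1) :
    G.Adj p.1 q.1 :=
  h.resolve_right fun h' => hne h'.1

theorem lexProd_compl : (G.lexProd H)ᶜ = Gᶜ.lexProd Hᶜ := by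
  ext ⟨u, x⟩ ⟨v, y⟩
  by_cases huv : u = v
  · subst huv
    simp [lexProd_adj]
  · simp [lexProd_adj, huv]

theorem IsClique.prod_lexProd {C : Set α} {D : Set β} (hC : G.IsClique C) (hD : H.IsClique D) :
    (G.lexProd H).IsClique (C ×ˢ D) := by
  rintro ⟨u, x⟩ ⟨hu, hx⟩ ⟨v, y⟩ ⟨hv, hy⟩ hne
  by_cases huv : u = v
  · subst huv
    exact Or.inr ⟨rfl, hD hx hy fun hxy => hne (Prod.ext rfl hxy)⟩
  · exact Or.inl (hC hu hv huv)

theorem maximal_isClique_prod_lexProd {C : Set α} {D : Set β}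
    (hC : Maximal G.IsClique C) (hD : Maximal H.IsClique D) :
    Maximal (G.lexProd H).IsClique (C ×ˢ D) := by
  refine ⟨hC.1.prod_lexProd hD.1, fun K hK hCD ⟨u, x⟩ hux => ?_⟩
  have : Nonempty β := ⟨x⟩
  obtain ⟨y₀, hy₀⟩ := hD.nonempty_of_isClique
  have hu : u ∈ C := hC.mem_of_prop_insert <| hC.1.insert fun v hv huv =>
    adj_fst_of_lexProd_adj (hK hux (hCD (Set.mk_mem_prod hv hy₀)) (by simp [huv])) huv
  exact ⟨hu, hD.mem_of_prop_insert <| hD.1.insert fun y hy hxy =>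
    lexProd_adj_same_fst.1 (hK hux (hCD (Set.mk_mem_prod hu hy)) (by simp [hxy]))⟩

theorem IsClique.image_fst {K : Set (α × β)} (hK : (G.lexProd H).IsClique K) :
    G.IsClique (Prod.fst '' K) := by
  rintro _ ⟨p, hp, rfl⟩ _ ⟨q, hq, rfl⟩ hne
  exact adj_fst_of_lexProd_adj (hK hp hq fun h => hne (by rw [h])) hne

theorem IsClique.preimage_mk {K : Set (α × β)} (hK : (G.lexProd H).IsClique K) (u : α) :
    H.IsClique (Prod.mk u ⁻¹' K) := fun x hx y hy hxy =>
  lexProd_adj_same_fst.1 (hK hx hy (by simp [hxy]))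

theorem maximal_isClique_image_fst [Nonempty β] {K : Set (α × β)}
    (hK : Maximal (G.lexProd H).IsClique K) : Maximal G.IsClique (Prod.fst '' K) := by
  refine ⟨hK.1.image_fst, fun C hC hKC u hu => ?_⟩
  by_contra huK
  obtain ⟨x⟩ := ‹Nonempty β›
  have hne : ∀ p ∈ K, u ≠ p.1 := fun p hp h => huK ⟨p, hp, h.symm⟩
  have hux : (u, x) ∈ K := hK.mem_of_prop_insert <| hK.1.insert fun p hp _ =>
    Or.inl (hC hu (hKC ⟨p, hp, rfl⟩) (hne p hp))
  exact hne _ hux rfl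

/-- Every vertex outside the fibre over `u` is adjacent to all of it or to none of it, so any
vertex over `u` adjacent to the whole fibre extends `K`. -/
theorem maximal_isClique_preimage_mk {K : Set (α × β)}
    (hK : Maximal (G.lexProd H).IsClique K) {u : α} (hu : u ∈ Prod.fst '' K) :
    Maximal H.IsClique (Prod.mk u ⁻¹' K) := by
  obtain ⟨x₀, hx₀⟩ : ∃ x₀, (u, x₀) ∈ K := by
    obtain ⟨⟨_, x₀⟩, hx₀, rfl⟩ := hu
    exact ⟨x₀, hx₀⟩
  refine ⟨hK.1.preimage_mk _, fun D hD hKD x hx => hK.mem_of_prop_insert <|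
    hK.1.insert fun ⟨v, y⟩ hvy hne => ?_⟩
  by_cases huv : u = v
  · subst huv
    exact Or.inr ⟨rfl, hD hx (hKD hvy) fun hxy => hne (by rw [hxy])⟩
  · exact Or.inl (show G.Adj u v from adj_fst_of_lexProd_adj (hK.1 hx₀ hvy (by simp [huv])) huv)

theorem maximalCliquesMeet_lexProd_iff :
    (G.lexProd H).MaximalCliquesMeet (G'.lexProd H') ↔
      G.MaximalCliquesMeet G' ∧ H.MaximalCliquesMeet H' := by
  constructor
  · intro h
    obtain ⟨C₀, hC₀⟩ := G.exists_maximal_isClique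
    obtain ⟨C₀', hC₀'⟩ := G'.exists_maximal_isClique
    obtain ⟨D₀, hD₀⟩ := H.exists_maximal_isClique
    obtain ⟨D₀', hD₀'⟩ := H'.exists_maximal_isClique
    refine ⟨fun C C' hC hC' => ?_, fun D D' hD hD' => ?_⟩
    · obtain ⟨p, ⟨hpC, -⟩, ⟨hpC', -⟩⟩ := h _ _
        (maximal_isClique_prod_lexProd hC hD₀) (maximal_isClique_prod_lexProd hC' hD₀')
      exact ⟨p.1, hpC, hpC'⟩
    · obtain ⟨p, ⟨-, hpD⟩, ⟨-, hpD'⟩⟩ := h _ _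
        (maximal_isClique_prod_lexProd hC₀ hD) (maximal_isClique_prod_lexProd hC₀' hD')
      exact ⟨p.2, hpD, hpD'⟩
  · rintro ⟨hG, hH⟩ K K' hK hK'
    have := hH.nonempty
    obtain ⟨u, hu, hu'⟩ := hG _ _
      (maximal_isClique_image_fst hK) (maximal_isClique_image_fst hK')
    obtain ⟨x, hx, hx'⟩ := hH _ _
      (maximal_isClique_preimage_mk hK hu) (maximal_isClique_preimage_mk hK' hu')
    exact ⟨(u, x), hx, hx'⟩

end SimpleGraph

theorem lexProd_cis_iff {α β : Type*} (G : SimpleGraph α) (H : SimpleGraph β) :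
    (G.lexProd H).IsCIS ↔ G.IsCIS ∧ H.IsCIS := by
  simp only [isCIS_iff_maximalCliquesMeet_compl, lexProd_compl]
  exact maximalCliquesMeet_lexProd_iff
end

section
/- A graph is CIS if and only if its irreducible quotient (the quotient by the equivalence relation 'having the same open neighborhood') is CIS. -/
open SimpleGraph

variable {V : Type*}

/-- The equivalence relation "having the same open neighborhood". -/
def SimpleGraph.nbhdSetoid (G : SimpleGraph V) : Setoid V :=
  ⟨fun u v => G.neighborSet u = G.neighborSet v,
    ⟨fun _ => rfl, Eq.symm, Eq.trans⟩⟩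

/-- The irreducible quotient of a graph: the quotient by the relation
"having the same open neighborhood". -/
def SimpleGraph.irreducibleQuotient (G : SimpleGraph V) :
    SimpleGraph (Quotient G.nbhdSetoid) where
  Adj x y := ∃ u v : V, Quotient.mk G.nbhdSetoid u = x ∧
      Quotient.mk G.nbhdSetoid v = y ∧ G.Adj u v
  symm := by
    constructor
    rintro x y ⟨u, v, hu, hv, huv⟩
    exact ⟨v, u, hv, hu, huv.symm⟩
  loopless := by
    constructor
    rintro x ⟨u, v, hu, hv, huv⟩
    have h : G.neighborSet u = G.neighborSet v := Quotient.exact (hu.trans hv.symm)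
    have : v ∈ G.neighborSet v := h ▸ huv
    exact G.loopless.irrefl v this

/-!
A graph is the pullback of its irreducible quotient along the quotient map: every vertex of the
quotient is blown up into a stable set of twins. Along any such surjective pullback, maximal
stable sets are exactly the preimages of maximal stable sets, and maximal cliques are exactly the
sets picking one vertex from each fibre over a maximal clique of the base. Since maximal stable
sets are unions of fibres, a maximal clique meets a maximal stable set upstairs if and only if
their images meet downstairs.
-/

open Set Function

namespace SimpleGraph

variable {W : Type*} {H : SimpleGraph W} {f : V → W}

lemma comap_irreducibleQuotient (G : SimpleGraph V) :
    G.irreducibleQuotient.comap (Quotient.mk G.nbhdSetoid) = G := by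
  ext u v
  refine ⟨fun ⟨u', v', hu, hv, h⟩ => ?_, fun h => ⟨u, v, rfl, rfl, h⟩⟩
  have hu : G.neighborSet u' = G.neighborSet u := Quotient.exact hu
  have hv : G.neighborSet v' = G.neighborSet v := Quotient.exact hv
  have huv' : G.Adj u v' := (Set.ext_iff.mp hu v').mp h
  exact ((Set.ext_iff.mp hv u).mp huv'.symm).symm

lemma IsStableSet.image {S : Set V} (hS : (H.comap f).IsStableSet S) :
    H.IsStableSet (f '' S) := by
  rintro _ ⟨u, hu, rfl⟩ _ ⟨v, hv, rfl⟩ hne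
  exact hS hu hv (ne_of_apply_ne f hne)

lemma IsStableSet.preimage {S : Set W} (hS : H.IsStableSet S) :
    (H.comap f).IsStableSet (f ⁻¹' S) :=
  fun _ hu _ hv _ hadj => hS hu hv (H.ne_of_adj hadj) hadj

lemma maximal_isStableSet_comap_preimage_iff (hf : Surjective f) {S : Set W} :
    Maximal (H.comap f).IsStableSet (f ⁻¹' S) ↔ Maximal H.IsStableSet S := by
  refine ⟨fun h => ⟨?_, fun T hT hST => ?_⟩, fun h => ⟨h.1.preimage, fun T hT hST => ?_⟩⟩
  · exact hf.image_preimage S ▸ h.1.image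
  · exact hf.preimage_subset_preimage_iff.mp (h.2 hT.preimage (preimage_mono hST))
  · have hS : S ⊆ f '' T := (hf.image_preimage S).symm.subset.trans (image_mono hST)
    exact (subset_preimage_image f T).trans (preimage_mono (h.2 hT.image hS))

/-- Twins of a vertex of a maximal stable set can be added to it, so it is a union of fibres. -/
lemma preimage_image_eq_of_maximal_isStableSet_comap {S : Set V}
    (hS : Maximal (H.comap f).IsStableSet S) : f ⁻¹' (f '' S) = S := by
  refine Subset.antisymm (fun v ⟨u, hu, hfu⟩ => ?_) (subset_preimage_image f S)
  have hv : ∀ w ∈ S, ¬ H.Adj (f v) (f w) := fun w hw hadj => by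
    rw [← hfu] at hadj
    rcases eq_or_ne u w with rfl | hne
    · exact hadj.ne rfl
    · exact hS.1 hu hw hne hadj
  exact hS.mem_of_prop_insert <|
    pairwise_insert.mpr ⟨hS.1, fun w hw _ => ⟨hv w hw, fun h => hv w hw h.symm⟩⟩

lemma IsClique.image {C : Set V} (hC : (H.comap f).IsClique C) : H.IsClique (f '' C) := by
  rintro _ ⟨u, hu, rfl⟩ _ ⟨v, hv, rfl⟩ hne
  exact hC hu hv (ne_of_apply_ne f hne)

lemma maximal_isClique_image_of_comap (hf : Surjective f) {C : Set V}
    (hC : Maximal (H.comap f).IsClique C) : Maximal H.IsClique (f '' C) := by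
  refine ⟨hC.1.image, fun T hT hCT x hx => ?_⟩
  obtain ⟨v, rfl⟩ := hf x
  by_contra hvC
  have hv : v ∈ C := hC.mem_of_prop_insert <| isClique_insert.mpr ⟨hC.1, fun u hu _ =>
    hT hx (hCT (mem_image_of_mem f hu)) fun h => hvC (h ▸ mem_image_of_mem f hu)⟩
  exact hvC (mem_image_of_mem f hv)

/-- The lift is the image of the maximal clique under a section of `f`. -/
lemma exists_maximal_isClique_comap_image_eq (hf : Surjective f) {C : Set W}
    (hC : Maximal H.IsClique C) : ∃ C' : Set V, Maximal (H.comap f).IsClique C' ∧ f '' C' = C := by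
  set g := surjInv hf
  have hfg : ∀ x, f (g x) = x := rightInverse_surjInv hf
  have himage : f '' (g '' C) = C := by simp only [image_image, hfg, image_id']
  refine ⟨g '' C, ⟨?_, fun T hT hCT v hv => ?_⟩, himage⟩
  · rintro _ ⟨x, hx, rfl⟩ _ ⟨y, hy, rfl⟩ hne
    show H.Adj (f (g x)) (f (g y))
    rw [hfg, hfg]
    exact hC.1 hx hy fun h => hne (h ▸ rfl)
  · have hTC : f '' T = C := (hC.eq_of_subset hT.image (himage ▸ image_mono hCT)).symm
    have hfv : f v ∈ C := hTC ▸ mem_image_of_mem f hv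
    have hgfv : g (f v) = v := by
      by_contra hne
      exact H.ne_of_adj (hT (hCT (mem_image_of_mem g hfv)) hv hne) (hfg _)
    exact hgfv ▸ mem_image_of_mem g hfv

theorem isCIS_comap_iff (hf : Surjective f) : (H.comap f).IsCIS ↔ H.IsCIS := by
  constructor
  · intro hG C S hC hS
    obtain ⟨C', hC', rfl⟩ := exists_maximal_isClique_comap_image_eq hf hC
    obtain ⟨v, hvC, hvS⟩ := hG C' _ hC' ((maximal_isStableSet_comap_preimage_iff hf).mpr hS)
    exact ⟨f v, mem_image_of_mem f hvC, hvS⟩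
  · intro hH C S hC hS
    have hSsat := preimage_image_eq_of_maximal_isStableSet_comap hS
    obtain ⟨_, ⟨v, hvC, rfl⟩, hvS⟩ := hH _ _ (maximal_isClique_image_of_comap hf hC)
      ((maximal_isStableSet_comap_preimage_iff hf).mp (hSsat.symm ▸ hS))
    exact ⟨v, hvC, hSsat ▸ show v ∈ f ⁻¹' (f '' S) from hvS⟩

end SimpleGraph

theorem cis_iff_irreducibleQuotient_cis (G : SimpleGraph V) :
    G.IsCIS ↔ G.irreducibleQuotient.IsCIS := by
  conv_lhs => rw [← comap_irreducibleQuotient G]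
  exact isCIS_comap_iff Quotient.mk_surjective
end

section
/- In an irreducible CIS graph with clique number t, no two cliques of size t intersect in a set of size t−1. -/
open SimpleGraph

variable {V : Type*}

/-- A graph is irreducible if no two distinct vertices have the same open neighborhood. -/
def SimpleGraph.Irreducible (G : SimpleGraph V) : Prop :=
  ∀ u v : V, G.neighborSet u = G.neighborSet v → u = v

/-!
Write the two cliques as `K ∪ {x}` and `K ∪ {y}`; having maximum size, they are maximal. If `z`
were a neighbour of `x` but not of `y`, a maximal stable set containing `{y, z}` would have to
meet `K ∪ {x}`; it cannot contain `x` (adjacent to `z`) nor any vertex of `K` (adjacent to `y`).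
So `CIS` forces `N(x) ⊆ N(y)`, symmetrically `N(y) ⊆ N(x)`, and irreducibility gives `x = y`.
-/

namespace Finset

variable {α : Type*} [DecidableEq α]

lemma exists_sdiff_eq_singleton_of_card_inter {s t : Finset α} {n : ℕ} (hs : #s = n)
    (ht : #t = n) (hst : s ≠ t) (h : #(s ∩ t) = n - 1) : ∃ x, s \ t = {x} := by
  have hn : n ≠ 0 := by
    rintro rfl
    exact hst ((card_eq_zero.1 hs).trans (card_eq_zero.1 ht).symm)
  rw [← card_eq_one, card_sdiff, inter_comm, h, hs]
  omega

end Finset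

namespace SimpleGraph

variable {G : SimpleGraph V}

lemma IsNClique.maximal_of_cliqueNum_eq [Finite V] {s : Finset V} {t : ℕ}
    (hω : G.cliqueNum = t) (h : G.IsNClique t s) : Maximal G.IsClique (s : Set V) :=
  IsMaximumClique.isMaximalClique s
    ⟨h.isClique, fun _ hu => h.card_eq ▸ hω ▸ hu.card_le_cliqueNum⟩

lemma IsStableSet.exists_maximal_superset {s : Set V} (hs : G.IsStableSet s) :
    ∃ S, s ⊆ S ∧ Maximal G.IsStableSet S :=
  zorn_subset_nonempty {S | G.IsStableSet S}
    (fun _ hc hchain _ => ⟨_, (Set.pairwise_sUnion hchain.directedOn).2 hc,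
      fun _ => Set.subset_sUnion_of_mem⟩) s hs

lemma IsCIS.exists_mem_forall_not_adj (hcis : G.IsCIS) {C s : Set V}
    (hC : Maximal G.IsClique C) (hs : G.IsStableSet s) : ∃ w ∈ C, ∀ v ∈ s, ¬ G.Adj w v := by
  obtain ⟨S, hsS, hS⟩ := hs.exists_maximal_superset
  obtain ⟨w, hwC, hwS⟩ := hcis C S hC hS
  exact ⟨w, hwC, fun v hv hwv => hS.prop hwS (hsS hv) hwv.ne hwv⟩

lemma IsCIS.neighborSet_subset_of_sdiff_subset_singleton (hcis : G.IsCIS) {C₁ C₂ : Set V}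
    {x y : V} (hC₁ : Maximal G.IsClique C₁) (hC₂ : G.IsClique C₂) (hx : C₁ \ C₂ ⊆ {x})
    (hy : y ∈ C₂ \ C₁) : G.neighborSet x ⊆ G.neighborSet y := by
  intro z hxz
  by_contra hyz
  have hstable : G.IsStableSet {y, z} :=
    Set.pairwise_pair.2 fun _ => ⟨hyz, fun h => hyz h.symm⟩
  obtain ⟨w, hwC₁, hw⟩ := hcis.exists_mem_forall_not_adj hC₁ hstable
  by_cases hwC₂ : w ∈ C₂
  · exact hw y (by simp) (hC₂ hwC₂ hy.1 (ne_of_mem_of_not_mem hwC₁ hy.2))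
  · obtain rfl : w = x := hx ⟨hwC₁, hwC₂⟩
    exact hw z (by simp) hxz

lemma IsCIS.false_of_sdiff_eq_singletons (hirr : G.Irreducible) (hcis : G.IsCIS)
    {C₁ C₂ : Set V} {x y : V} (hC₁ : Maximal G.IsClique C₁) (hC₂ : Maximal G.IsClique C₂)
    (hx : C₁ \ C₂ = {x}) (hy : C₂ \ C₁ = {y}) : False := by
  have hxC : x ∈ C₁ \ C₂ := hx ▸ rfl
  have hyC : y ∈ C₂ \ C₁ := hy ▸ rfl
  have hxy : x = y := hirr x y <| subset_antisymm
    (hcis.neighborSet_subset_of_sdiff_subset_singleton hC₁ hC₂.prop hx.subset hyC)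
    (hcis.neighborSet_subset_of_sdiff_subset_singleton hC₂ hC₁.prop hy.subset hxC)
  exact hxC.2 (hxy ▸ hyC.1)

end SimpleGraph

theorem no_two_max_cliques_meet_in_large_set (G : SimpleGraph V) [Fintype V]
    (hirr : G.Irreducible) (hcis : G.IsCIS) (t : ℕ) (hω : G.cliqueNum = t)
    (C₁ C₂ : Finset V) (h₁ : G.IsNClique t C₁) (h₂ : G.IsNClique t C₂)
    (hne : C₁ ≠ C₂) [DecidableEq V] :
    (C₁ ∩ C₂).card ≠ t - 1 := by
  intro hcard
  obtain ⟨x, hx⟩ := Finset.exists_sdiff_eq_singleton_of_card_inter h₁.card_eq h₂.card_eq hne hcard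
  obtain ⟨y, hy⟩ := Finset.exists_sdiff_eq_singleton_of_card_inter h₂.card_eq h₁.card_eq hne.symm
    (Finset.inter_comm C₁ C₂ ▸ hcard)
  exact hcis.false_of_sdiff_eq_singletons hirr (h₁.maximal_of_cliqueNum_eq hω)
    (h₂.maximal_of_cliqueNum_eq hω) (mod_cast hx) (mod_cast hy)
end

section
/- A connected graph with clique number 2 is CIS if and only if it is a complete bipartite graph K_{n,m} for some n, m ≥ 1. -/
open SimpleGraph

variable {V : Type*}

/-!
In a triangle-free graph every edge `bc` is a maximal clique. If moreover the graph is CIS, then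
the ends of every path `a - b - c - d` must be adjacent: otherwise a maximal stable set
containing `a` and `d` would miss `{b, c}`. Fixing an edge `uv`, this shows that every
neighbour of `v` is adjacent to every neighbour of `u`, and that the union of the two
neighbourhoods is closed under adjacency, hence is everything in a connected graph. Triangle-freeness
makes both neighbourhoods stable, so the graph is complete bipartite with sides `N(v)` and `N(u)`.

Conversely, in a complete bipartite graph with nonempty sides the maximal stable sets are the two
sides, and a maximal clique meets both of them.
-/

namespace SimpleGraph

variable {G : SimpleGraph V} {A C S : Set V} {a b c d u v : V}

/-- `G` is the complete bipartite graph with sides `A` and `Aᶜ`. -/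
def IsCompleteBipartition (G : SimpleGraph V) (A : Set V) : Prop :=
  ∀ x y, G.Adj x y ↔ (x ∈ A ↔ y ∉ A)

namespace IsCompleteBipartition

lemma compl (h : G.IsCompleteBipartition A) : G.IsCompleteBipartition Aᶜ := by
  intro x y
  rw [h, Set.mem_compl_iff, Set.mem_compl_iff]
  tauto

lemma isStableSet (h : G.IsCompleteBipartition A) : G.IsStableSet A :=
  fun x hx y hy _ hxy => ((h x y).1 hxy).1 hx hy

lemma subset_or_subset_compl_of_isStableSet (h : G.IsCompleteBipartition A)
    (hS : G.IsStableSet S) : S ⊆ A ∨ S ⊆ Aᶜ := by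
  by_contra! hSA
  obtain ⟨x, hxS, hxA⟩ := Set.not_subset.1 hSA.1
  obtain ⟨y, hyS, hyA⟩ := Set.not_subset.1 hSA.2
  rw [Set.notMem_compl_iff] at hyA
  exact hS hyS hxS (ne_of_mem_of_not_mem hyA hxA) ((h y x).2 (iff_of_true hyA hxA))

lemma eq_or_eq_compl_of_maximal_isStableSet (h : G.IsCompleteBipartition A)
    (hS : Maximal G.IsStableSet S) : S = A ∨ S = Aᶜ :=
  (h.subset_or_subset_compl_of_isStableSet hS.prop).imp
    (hS.eq_of_subset h.isStableSet) (hS.eq_of_subset h.compl.isStableSet)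

lemma inter_nonempty_of_maximal_isClique (h : G.IsCompleteBipartition A) (hA : A.Nonempty)
    (hC : Maximal G.IsClique C) : (C ∩ A).Nonempty := by
  obtain ⟨a, ha⟩ := hA
  by_contra hCA
  have hCAc : ∀ y ∈ C, y ∉ A := fun y hy hyA => hCA ⟨y, hy, hyA⟩
  have haC : a ∈ C := hC.mem_of_prop_insert <|
    isClique_insert.2 ⟨hC.prop, fun y hy _ => (h a y).2 (iff_of_true ha (hCAc y hy))⟩
  exact hCAc a haC ha

theorem isCIS (h : G.IsCompleteBipartition A) (hA : A.Nonempty) (hAc : Aᶜ.Nonempty) :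
    G.IsCIS := by
  intro C S hC hS
  rcases h.eq_or_eq_compl_of_maximal_isStableSet hS with rfl | rfl
  · exact h.inter_nonempty_of_maximal_isClique hA hC
  · exact h.compl.inter_nonempty_of_maximal_isClique hAc hC

lemma nonempty_iso (h : G.IsCompleteBipartition A) :
    Nonempty (completeBipartiteGraph A ↥Aᶜ ≃g G) := by
  classical
  refine ⟨⟨Equiv.Set.sumCompl A, ?_⟩⟩
  rintro (⟨x, hx⟩ | ⟨x, hx⟩) (⟨y, hy⟩ | ⟨y, hy⟩) <;>
    simp_all [h x y, ← Set.mem_compl_iff]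

end IsCompleteBipartition

lemma Iso.isCompleteBipartition {α β : Type*} (e : G ≃g completeBipartiteGraph α β) :
    G.IsCompleteBipartition {x | (e x).isLeft} := by
  intro x y
  rw [← e.map_adj_iff]
  change _ ↔ ((e x).isLeft ↔ ¬ (e y).isLeft)
  generalize e x = p, e y = q
  cases p <;> cases q <;> simp

theorem exists_iso_completeBipartiteGraph_fin_iff [Finite V] :
    (∃ n m : ℕ, 1 ≤ n ∧ 1 ≤ m ∧ Nonempty (G ≃g completeBipartiteGraph (Fin n) (Fin m))) ↔
      ∃ A, G.IsCompleteBipartition A ∧ A.Nonempty ∧ Aᶜ.Nonempty := by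
  constructor
  · rintro ⟨n, m, hn, hm, ⟨e⟩⟩
    exact ⟨_, e.isCompleteBipartition, ⟨e.symm (.inl ⟨0, hn⟩), by simp⟩,
      ⟨e.symm (.inr ⟨0, hm⟩), by simp⟩⟩
  · rintro ⟨A, hA, hne, hcne⟩
    have := hne.to_subtype
    have := hcne.to_subtype
    obtain ⟨e⟩ := hA.nonempty_iso
    exact ⟨_, _, Nat.card_pos, Nat.card_pos,
      ⟨e.symm.trans (completeBipartiteGraphCongr (Finite.equivFin _) (Finite.equivFin _))⟩⟩

lemma cliqueFree_of_cliqueNum_lt [Finite V] {n : ℕ} (h : G.cliqueNum < n) : G.CliqueFree n :=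
  fun _ ht => (ht.card_eq ▸ IsClique.card_le_cliqueNum (tc := ht.isClique)).not_gt h

lemma maximal_isClique_pair_of_cliqueFree_three (h3 : G.CliqueFree 3) (hbc : G.Adj b c) :
    Maximal G.IsClique {b, c} := by
  classical
  refine ⟨isClique_pair.2 fun _ => hbc, fun t ht hsub x hx => ?_⟩
  by_contra hxbc
  simp only [Set.mem_insert_iff, Set.mem_singleton_iff, not_or] at hxbc
  exact h3 {x, b, c} <| is3Clique_triple_iff.2
    ⟨ht hx (hsub (.inl rfl)) hxbc.1, ht hx (hsub (.inr rfl)) hxbc.2, hbc⟩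

theorem IsCIS.adj_of_maximal_isClique_pair [Finite V] (hG : G.IsCIS)
    (hbc : Maximal G.IsClique {b, c}) (hab : G.Adj a b) (hcd : G.Adj c d) :
    G.Adj a d := by
  by_contra had
  have hstab : G.IsStableSet {a, d} := Set.pairwise_pair.2 fun _ => ⟨had, fun h => had h.symm⟩
  obtain ⟨S, hadS, hS⟩ := Finite.exists_le_maximal hstab
  obtain ⟨x, hxbc, hxS⟩ := hG _ _ hbc hS
  rcases hxbc with rfl | rfl
  · exact hS.prop (hadS (.inl rfl)) hxS hab.ne hab
  · exact hS.prop hxS (hadS (.inr rfl)) hcd.ne hcd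

theorem IsCIS.adj_of_adj_of_adj_of_adj [Finite V] (hG : G.IsCIS) (h3 : G.CliqueFree 3)
    (hab : G.Adj a b) (hbc : G.Adj b c) (hcd : G.Adj c d) : G.Adj a d :=
  hG.adj_of_maximal_isClique_pair (maximal_isClique_pair_of_cliqueFree_three h3 hbc) hab hcd

lemma Preconnected.mem_of_forall_adj_mem (hG : G.Preconnected)
    (hS : ∀ x y, x ∈ S → G.Adj x y → y ∈ S) (hu : u ∈ S) (v : V) : v ∈ S := by
  by_contra hv
  obtain ⟨d, -, hd, hd'⟩ := (hG u v).some.exists_boundary_dart S hu hv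
  exact hd' (hS _ _ hd d.adj)

theorem IsCIS.adj_or_adj_of_adj [Finite V] (hG : G.IsCIS) (h3 : G.CliqueFree 3)
    (hconn : G.Preconnected) (huv : G.Adj u v) (x : V) : G.Adj v x ∨ G.Adj u x := by
  refine hconn.mem_of_forall_adj_mem (S := {x | G.Adj v x ∨ G.Adj u x}) ?_ (.inl huv.symm) x
  rintro x y (hvx | hux) hxy
  · exact .inr (hG.adj_of_adj_of_adj_of_adj h3 hxy.symm hvx.symm huv.symm).symm
  · exact .inl (hG.adj_of_adj_of_adj_of_adj h3 hxy.symm hux.symm huv).symm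

theorem IsCIS.isCompleteBipartition_neighborSet [Finite V] (hG : G.IsCIS)
    (h3 : G.CliqueFree 3) (hconn : G.Preconnected) (huv : G.Adj u v) :
    G.IsCompleteBipartition (G.neighborSet v) := by
  classical
  have hN : ∀ {w x y}, G.Adj w x → G.Adj w y → ¬ G.Adj x y :=
    fun hwx hwy hxy => h3 _ (is3Clique_triple_iff.2 ⟨hwx, hwy, hxy⟩)
  have hvu : ∀ {y}, G.Adj u y → ¬ G.Adj v y := fun huy hvy => hN huy.symm hvy.symm huv
  have hcross : ∀ {x y}, G.Adj v x → G.Adj u y → G.Adj x y :=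
    fun hvx huy => hG.adj_of_adj_of_adj_of_adj h3 hvx.symm huv.symm huy
  intro x y
  rw [mem_neighborSet, mem_neighborSet]
  rcases hG.adj_or_adj_of_adj h3 hconn huv x with hvx | hux <;>
    rcases hG.adj_or_adj_of_adj h3 hconn huv y with hvy | huy
  · have := hN hvx hvy
    tauto
  · have := hcross hvx huy
    have := hvu huy
    tauto
  · have := (hcross hvy hux).symm
    have := hvu hux
    tauto
  · have := hN hux huy
    have := hvu hux
    have := hvu huy
    tauto

end SimpleGraph

theorem connected_cliqueNum_two_cis_iff (G : SimpleGraph V) [Fintype V]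
    (hconn : G.Connected) (hω : G.cliqueNum = 2) :
    G.IsCIS ↔ ∃ n m : ℕ, 1 ≤ n ∧ 1 ≤ m ∧
      Nonempty (G ≃g completeBipartiteGraph (Fin n) (Fin m)) := by
  have h3 : G.CliqueFree 3 := cliqueFree_of_cliqueNum_lt (by omega)
  obtain ⟨s, hs⟩ := G.exists_isNClique_cliqueNum
  rw [hω] at hs
  obtain ⟨u, v, huv⟩ := ne_bot_iff_exists_adj.1 (cliqueFree_two.not.1 hs.not_cliqueFree)
  rw [exists_iso_completeBipartiteGraph_fin_iff]
  constructor
  · intro hG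
    exact ⟨_, hG.isCompleteBipartition_neighborSet h3 hconn.preconnected huv, ⟨u, huv.symm⟩,
      ⟨v, G.irrefl⟩⟩
  · rintro ⟨A, hA, hne, hcne⟩
    exact hA.isCIS hne hcne
end

section
/- If Γ is a CIS graph and (a, b, c, d) is an induced path of length three in Γ, then there exists a vertex of Γ adjacent to both midpoints b and c and adjacent to neither endpoint a nor d. -/
open SimpleGraph

variable {V : Type*}

/-! Extend the clique `{b, c}` and the stable set `{a, d}` to a maximal clique and a maximal
stable set. By the CIS property they share a vertex `v`; it is adjacent to `b` and `c` (or equal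
to one of them) and adjacent to neither `a` nor `d`, and the edges `ab`, `cd` rule out `v = b`
and `v = c`. -/

theorem Set.Pairwise.exists_maximal_superset {α : Type*} {r : α → α → Prop} {s : Set α}
    (hs : s.Pairwise r) : ∃ m, s ⊆ m ∧ Maximal (fun t : Set α => t.Pairwise r) m :=
  zorn_subset_nonempty {t | t.Pairwise r}
    (fun _ hc hchain _ => ⟨_, (Set.pairwise_sUnion hchain.directedOn).2 hc,
      fun _ => Set.subset_sUnion_of_mem⟩) s hs

namespace SimpleGraph

theorem IsCIS.exists_adj_of_isClique_not_adj_of_isStableSet {G : SimpleGraph V}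
    (hG : G.IsCIS) {K I : Set V} (hK : G.IsClique K) (hI : G.IsStableSet I) :
    ∃ v, (∀ u ∈ K, u ≠ v → G.Adj v u) ∧ ∀ u ∈ I, ¬ G.Adj v u := by
  obtain ⟨C, hKC, hC⟩ := Set.Pairwise.exists_maximal_superset hK
  obtain ⟨S, hIS, hS⟩ := Set.Pairwise.exists_maximal_superset hI
  obtain ⟨v, hvC, hvS⟩ := hG C S hC hS
  exact ⟨v, fun u hu hne => hC.prop hvC (hKC hu) hne.symm,
    fun u hu hadj => hS.prop hvS (hIS hu) hadj.ne hadj⟩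

end SimpleGraph

theorem cis_induced_path_general (G : SimpleGraph V) (hcis : G.IsCIS) (a b c d : V)
    (hab : G.Adj a b) (hbc : G.Adj b c) (hcd : G.Adj c d)
    (had : ¬ G.Adj a d) :
    ∃ v : V, G.Adj v b ∧ G.Adj v c ∧ ¬ G.Adj v a ∧ ¬ G.Adj v d := by
  obtain ⟨v, hvK, hvI⟩ := hcis.exists_adj_of_isClique_not_adj_of_isStableSet
    (isClique_pair.2 fun _ => hbc) (Set.pairwise_pair.2 fun _ => ⟨had, fun h => had h.symm⟩)
  have hva : ¬ G.Adj v a := hvI a (by simp)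
  have hvd : ¬ G.Adj v d := hvI d (by simp)
  have hvb : v ≠ b := by rintro rfl; exact hva hab.symm
  have hvc : v ≠ c := by rintro rfl; exact hvd hcd
  exact ⟨v, hvK b (by simp) hvb.symm, hvK c (by simp) hvc.symm, hva, hvd⟩

theorem cis_induced_path (G : SimpleGraph V) (hcis : G.IsCIS) (a b c d : V)
    (hab : G.Adj a b) (hbc : G.Adj b c) (hcd : G.Adj c d)
    (hac : ¬ G.Adj a c) (had : ¬ G.Adj a d) (hbd : ¬ G.Adj b d)
    (hadne : a ≠ d) :
    ∃ v : V, G.Adj v b ∧ G.Adj v c ∧ ¬ G.Adj v a ∧ ¬ G.Adj v d :=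
  cis_induced_path_general G hcis a b c d hab hbc hcd had
end

section
/- For every n ≥ 1, the line graph L(K_{n,n}) is a connected vertex-transitive CIS graph of order n² and valency 2(n−1), with stability number n and clique number n. -/
open SimpleGraph

variable {V : Type*}

/-- The line graph of `K_{n,n}`, realized as the `n × n` rook's graph. -/
def rookGraph (n : ℕ) : SimpleGraph (Fin n × Fin n) where
  Adj p q := p ≠ q ∧ (p.1 = q.1 ∨ p.2 = q.2)
  symm := by
    constructor
    rintro p q ⟨hne, h | h⟩
    · exact ⟨hne.symm, Or.inl h.symm⟩
    · exact ⟨hne.symm, Or.inr h.symm⟩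
  loopless := by constructor; rintro p ⟨hne, -⟩; exact hne rfl

/-- A graph is vertex-transitive if for every pair of vertices there is an
automorphism mapping one to the other. -/
def SimpleGraph.IsVertexTransitive (G : SimpleGraph V) : Prop :=
  ∀ u v : V, ∃ φ : G ≃g G, φ u = v

/-- The stability (independence) number of a graph, i.e. the clique number of
the complement. -/
noncomputable def SimpleGraph.indepNum' (G : SimpleGraph V) : ℕ := Gᶜ.cliqueNum

/-!
`L(K_{n,n})` is the Cartesian product `K_n □ K_n` (the rook's graph), which gives connectivity
and the degrees. A clique with two cells in different rows lies in a column, so the maximal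
cliques are the rows and columns. A stable set is a partial permutation; a maximal one is a full
permutation, since otherwise a free row and a free column leave room for one more cell. Hence
every maximal stable set meets every row and every column.
-/

theorem Set.InjOn.image_eq_univ_of_ncard_eq {α β : Type*} [Finite β] {f : α → β} {s : Set α}
    (hf : s.InjOn f) (hs : s.ncard = Nat.card β) : f '' s = Set.univ :=
  Set.eq_of_subset_of_ncard_le (Set.subset_univ _) (by rw [hf.ncard_image, hs, Set.ncard_univ])

namespace SimpleGraph

variable {G : SimpleGraph V}

lemma indepNum'_eq_indepNum : G.indepNum' = G.indepNum := cliqueNum_compl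

lemma nonempty_of_maximal_isClique [Nonempty V] {C : Set V} (hC : Maximal G.IsClique C) :
    C.Nonempty := by
  obtain ⟨v⟩ := ‹Nonempty V›
  by_contra h
  rw [Set.not_nonempty_iff_eq_empty] at h
  subst h
  exact hC.2 (G.isClique_singleton v) (Set.empty_subset _) rfl

end SimpleGraph

namespace rookGraph

variable {n : ℕ}

lemma adj_iff {p q : Fin n × Fin n} :
    (rookGraph n).Adj p q ↔ p ≠ q ∧ (p.1 = q.1 ∨ p.2 = q.2) := Iff.rfl

theorem eq_boxProd (n : ℕ) : rookGraph n = (⊤ : SimpleGraph (Fin n)) □ ⊤ := by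
  ext p q
  simp only [adj_iff, boxProd_adj, top_adj, ne_eq, Prod.ext_iff]
  tauto

theorem connected [Nonempty (Fin n)] : (rookGraph n).Connected :=
  eq_boxProd n ▸ connected_top.boxProd connected_top

theorem ncard_neighborSet (v : Fin n × Fin n) :
    ((rookGraph n).neighborSet v).ncard = 2 * (n - 1) := by
  rw [eq_boxProd, Set.ncard_eq_toFinset_card', ← neighborFinset_def,
    card_neighborFinset_eq_degree, degree_boxProd]
  simp only [complete_graph_degree, Fintype.card_fin]
  ring

def prodCongrIso (σ τ : Equiv.Perm (Fin n)) : rookGraph n ≃g rookGraph n where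
  toEquiv := σ.prodCongr τ
  map_rel_iff' := by simp [adj_iff, Prod.ext_iff]

theorem isVertexTransitive : (rookGraph n).IsVertexTransitive := fun u v =>
  ⟨prodCongrIso (Equiv.swap u.1 v.1) (Equiv.swap u.2 v.2),
    Prod.ext (Equiv.swap_apply_left _ _) (Equiv.swap_apply_left _ _)⟩

def row (i : Fin n) : Set (Fin n × Fin n) := {p | p.1 = i}

def col (j : Fin n) : Set (Fin n × Fin n) := {p | p.2 = j}

lemma isClique_row (i : Fin n) : (rookGraph n).IsClique (row i) :=
  fun _ hp _ hq hpq => ⟨hpq, Or.inl (hp.trans hq.symm)⟩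

lemma isClique_col (j : Fin n) : (rookGraph n).IsClique (col j) :=
  fun _ hp _ hq hpq => ⟨hpq, Or.inr (hp.trans hq.symm)⟩

lemma ncard_row (i : Fin n) : (row i).ncard = n := by
  rw [show row i = {i} ×ˢ Set.univ by ext; simp [row], Set.ncard_prod]
  simp

lemma ncard_col (j : Fin n) : (col j).ncard = n := by
  rw [show col j = Set.univ ×ˢ {j} by ext; simp [col], Set.ncard_prod]
  simp

theorem subset_row_or_subset_col_of_isClique {s : Set (Fin n × Fin n)}
    (hs : (rookGraph n).IsClique s) {p : Fin n × Fin n} (hp : p ∈ s) :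
    s ⊆ row p.1 ∨ s ⊆ col p.2 := by
  by_contra! ⟨hrow, hcol⟩
  obtain ⟨q, hq, hqp⟩ := Set.not_subset.1 hrow
  obtain ⟨r, hr, hrp⟩ := Set.not_subset.1 hcol
  have hq₂ : q.2 = p.2 := (hs hq hp (by rintro rfl; exact hqp rfl)).2.resolve_left hqp
  have hr₁ : r.1 = p.1 := (hs hr hp (by rintro rfl; exact hrp rfl)).2.resolve_right hrp
  rcases (hs hq hr (by rintro rfl; exact hrp hq₂)).2 with h | h
  · exact hqp (h.trans hr₁)
  · exact hrp (h.symm.trans hq₂)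

theorem ncard_le_of_isClique {s : Set (Fin n × Fin n)} (hs : (rookGraph n).IsClique s) :
    s.ncard ≤ n := by
  obtain rfl | ⟨p, hp⟩ := s.eq_empty_or_nonempty
  · simp
  rcases subset_row_or_subset_col_of_isClique hs hp with h | h
  · exact (Set.ncard_le_ncard h).trans_eq (ncard_row p.1)
  · exact (Set.ncard_le_ncard h).trans_eq (ncard_col p.2)

theorem eq_row_or_eq_col_of_maximal_isClique {C : Set (Fin n × Fin n)}
    (hC : Maximal (rookGraph n).IsClique C) {p : Fin n × Fin n} (hp : p ∈ C) :
    C = row p.1 ∨ C = col p.2 :=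
  (subset_row_or_subset_col_of_isClique hC.1 hp).imp (hC.eq_of_subset (isClique_row _))
    (hC.eq_of_subset (isClique_col _))

theorem cliqueNum_eq [Nonempty (Fin n)] : (rookGraph n).cliqueNum = n := by
  obtain ⟨s, hs⟩ := (rookGraph n).exists_isNClique_cliqueNum
  obtain ⟨i⟩ := ‹Nonempty (Fin n)›
  refine le_antisymm ?_ ?_
  · rw [← hs.card_eq, ← Set.ncard_coe_finset]
    exact ncard_le_of_isClique hs.isClique
  · calc n = (row i).ncard := (ncard_row i).symm
      _ = (row i).toFinite.toFinset.card := Set.ncard_eq_toFinset_card _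
      _ ≤ _ := IsClique.card_le_cliqueNum
        (tc := by rw [Set.Finite.coe_toFinset]; exact isClique_row i)

theorem isStableSet_iff {S : Set (Fin n × Fin n)} :
    (rookGraph n).IsStableSet S ↔ S.InjOn Prod.fst ∧ S.InjOn Prod.snd := by
  constructor
  · intro hS
    exact ⟨fun p hp q hq h => by_contra fun hne => hS hp hq hne ⟨hne, Or.inl h⟩,
      fun p hp q hq h => by_contra fun hne => hS hp hq hne ⟨hne, Or.inr h⟩⟩
  · rintro ⟨h₁, h₂⟩ p hp q hq hne ⟨-, h | h⟩
    exacts [hne (h₁ hp hq h), hne (h₂ hp hq h)]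

theorem ncard_le_of_isStableSet {S : Set (Fin n × Fin n)} (hS : (rookGraph n).IsStableSet S) :
    S.ncard ≤ n :=
  calc S.ncard = (Prod.fst '' S).ncard := ((isStableSet_iff.1 hS).1.ncard_image).symm
    _ ≤ Nat.card (Fin n) := Set.ncard_le_card _
    _ = n := Nat.card_fin n

theorem ncard_eq_of_maximal_isStableSet {S : Set (Fin n × Fin n)}
    (hS : Maximal (rookGraph n).IsStableSet S) : S.ncard = n := by
  obtain ⟨h₁, h₂⟩ := isStableSet_iff.1 hS.1
  refine (ncard_le_of_isStableSet hS.1).antisymm (not_lt.1 fun hlt => ?_)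
  obtain ⟨i, -, hi⟩ := Set.exists_mem_notMem_of_ncard_lt_ncard (s := Prod.fst '' S)
    (t := Set.univ) (by simpa [h₁.ncard_image])
  obtain ⟨j, -, hj⟩ := Set.exists_mem_notMem_of_ncard_lt_ncard (s := Prod.snd '' S)
    (t := Set.univ) (by simpa [h₂.ncard_image])
  have hij : (i, j) ∉ S := fun h => hi ⟨_, h, rfl⟩
  have hstable : (rookGraph n).IsStableSet (insert (i, j) S) :=
    isStableSet_iff.2
      ⟨(Set.injOn_insert hij).2 ⟨h₁, hi⟩, (Set.injOn_insert hij).2 ⟨h₂, hj⟩⟩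
  exact hij (hS.2 hstable (Set.subset_insert _ _) (Set.mem_insert _ _))

theorem row_inter_nonempty_of_maximal_isStableSet {S : Set (Fin n × Fin n)}
    (hS : Maximal (rookGraph n).IsStableSet S) (i : Fin n) : (row i ∩ S).Nonempty := by
  have hfst := (isStableSet_iff.1 hS.1).1.image_eq_univ_of_ncard_eq
    (by rw [ncard_eq_of_maximal_isStableSet hS, Nat.card_fin])
  obtain ⟨p, hp, rfl⟩ : i ∈ Prod.fst '' S := hfst ▸ Set.mem_univ i
  exact ⟨p, rfl, hp⟩

theorem col_inter_nonempty_of_maximal_isStableSet {S : Set (Fin n × Fin n)}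
    (hS : Maximal (rookGraph n).IsStableSet S) (j : Fin n) : (col j ∩ S).Nonempty := by
  have hsnd := (isStableSet_iff.1 hS.1).2.image_eq_univ_of_ncard_eq
    (by rw [ncard_eq_of_maximal_isStableSet hS, Nat.card_fin])
  obtain ⟨p, hp, rfl⟩ : j ∈ Prod.snd '' S := hsnd ▸ Set.mem_univ j
  exact ⟨p, rfl, hp⟩

theorem isCIS [Nonempty (Fin n)] : (rookGraph n).IsCIS := by
  intro C S hC hS
  obtain ⟨p, hp⟩ := nonempty_of_maximal_isClique hC
  rcases eq_row_or_eq_col_of_maximal_isClique hC hp with rfl | rfl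
  exacts [row_inter_nonempty_of_maximal_isStableSet hS p.1,
    col_inter_nonempty_of_maximal_isStableSet hS p.2]

theorem indepNum'_eq : (rookGraph n).indepNum' = n := by
  rw [indepNum'_eq_indepNum]
  obtain ⟨s, hs⟩ := (rookGraph n).exists_isNIndepSet_indepNum
  refine le_antisymm ?_ ?_
  · rw [← hs.card_eq, ← Set.ncard_coe_finset]
    exact ncard_le_of_isStableSet hs.isIndepSet
  · have hdiag : (rookGraph n).IsIndepSet (Finset.univ.diag : Finset (Fin n × Fin n)) := by
      refine isStableSet_iff.2 ⟨fun p hp q hq h => ?_, fun p hp q hq h => ?_⟩ <;>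
        simp only [Finset.mem_coe, Finset.mem_diag, Finset.mem_univ, true_and] at hp hq
      exacts [Prod.ext h (by rw [← hp, ← hq, h]), Prod.ext (by rw [hp, hq, h]) h]
    simpa using hdiag.card_le_indepNum

end rookGraph

theorem rookGraph_properties (n : ℕ) (hn : 1 ≤ n) :
    (rookGraph n).Connected ∧
    (rookGraph n).IsVertexTransitive ∧
    (rookGraph n).IsCIS ∧
    Fintype.card (Fin n × Fin n) = n ^ 2 ∧
    (∀ v : Fin n × Fin n, ((rookGraph n).neighborSet v).ncard = 2 * (n - 1)) ∧
    (rookGraph n).indepNum' = n ∧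
    (rookGraph n).cliqueNum = n := by
  have : Nonempty (Fin n) := ⟨⟨0, hn⟩⟩
  exact ⟨rookGraph.connected, rookGraph.isVertexTransitive, rookGraph.isCIS, by simp [sq],
    rookGraph.ncard_neighborSet, rookGraph.indepNum'_eq, rookGraph.cliqueNum_eq⟩
end

section
/- For n ≥ 4, the graph Q_n is well-covered with stability number n: every maximal stable set of Q_n has size exactly n, containing exactly one vertex with each first coordinate. -/
open SimpleGraph

variable {V : Type*}

/-- The graph `Q_n`: vertex set `Z_n × Z_2 × Z_2`, where `(i,x,y)` and `(j,u,v)`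
are adjacent iff `j = i+1` and `u = y`, or `i = j+1` and `y = v`, or `i = j` and
`(x,y) ≠ (u,v)`. -/
def Qgraph (n : ℕ) : SimpleGraph (ZMod n × ZMod 2 × ZMod 2) where
  Adj p q := p ≠ q ∧
    ((q.1 = p.1 + 1 ∧ q.2.1 = p.2.2) ∨ (p.1 = q.1 + 1 ∧ p.2.1 = q.2.2) ∨ p.1 = q.1)
  symm := by
    constructor
    rintro p q ⟨hne, h | h | h⟩
    · exact ⟨hne.symm, Or.inr (Or.inl h)⟩
    · exact ⟨hne.symm, Or.inl h⟩
    · exact ⟨hne.symm, Or.inr (Or.inr h.symm)⟩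
  loopless := by constructor; rintro p ⟨hne, -⟩; exact hne rfl

/-!
Vertices of `Q_n` with the same first coordinate are pairwise adjacent, so a stable set meets
each fibre `{i} × Z_2 × Z_2` at most once. Conversely, if a stable set `S` misses the fibre over
`i`, then at most one vertex of `S` lies over `i - 1` and at most one over `i + 1`; each forbids
a single value of one coordinate of `(i, x, y)`, so some `(i, x, y)` can be added to `S`, and `S`
is not maximal.
-/

theorem SimpleGraph.IsStableSet.insert {G : SimpleGraph V} {s : Set V} {v : V}
    (hs : G.IsStableSet s) (hv : ∀ w ∈ s, ¬ G.Adj v w) : G.IsStableSet (insert v s) :=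
  Set.Pairwise.insert hs fun w hw _ => ⟨hv w hw, fun h => hv w hw h.symm⟩

theorem SimpleGraph.mem_of_maximal_isStableSet {G : SimpleGraph V} {s : Set V} {v : V}
    (hs : Maximal G.IsStableSet s) (hv : ∀ w ∈ s, ¬ G.Adj v w) : v ∈ s :=
  hs.2 (hs.1.insert hv) (Set.subset_insert v s) (Set.mem_insert v s)

theorem Set.Subsingleton.exists_forall_ne {α β : Type*} [Nontrivial β] {s : Set α}
    (hs : s.Subsingleton) (g : α → β) : ∃ y, ∀ a ∈ s, g a ≠ y := by
  rcases s.eq_empty_or_nonempty with rfl | ⟨a, ha⟩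
  · exact ⟨Classical.arbitrary β, fun _ h => h.elim⟩
  · obtain ⟨y, hy⟩ := exists_ne (g a)
    exact ⟨y, fun b hb => hs hb ha ▸ hy.symm⟩

namespace Qgraph

variable {n : ℕ} {S : Set (ZMod n × ZMod 2 × ZMod 2)}

theorem adj_of_fst_eq {p q : ZMod n × ZMod 2 × ZMod 2} (hne : p ≠ q) (h : p.1 = q.1) :
    (Qgraph n).Adj p q :=
  ⟨hne, Or.inr (Or.inr h)⟩

theorem injOn_fst (hS : (Qgraph n).IsStableSet S) : Set.InjOn Prod.fst S :=
  fun _ hv _ hw h => by_contra fun hne => hS hv hw hne (adj_of_fst_eq hne h)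

theorem subsingleton_fiber (hS : (Qgraph n).IsStableSet S) (j : ZMod n) :
    {w ∈ S | w.1 = j}.Subsingleton :=
  fun _ hv _ hw => injOn_fst hS hv.1 hw.1 (hv.2.trans hw.2.symm)

theorem exists_forall_not_adj (hS : (Qgraph n).IsStableSet S) (i : ZMod n)
    (hi : ∀ w ∈ S, w.1 ≠ i) :
    ∃ v : ZMod n × ZMod 2 × ZMod 2, v.1 = i ∧ ∀ w ∈ S, ¬ (Qgraph n).Adj v w := by
  obtain ⟨x, hx⟩ := (subsingleton_fiber hS (i - 1)).exists_forall_ne (·.2.2)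
  obtain ⟨y, hy⟩ := (subsingleton_fiber hS (i + 1)).exists_forall_ne (·.2.1)
  refine ⟨(i, x, y), rfl, ?_⟩
  rintro w hw ⟨-, ⟨hw1, hwy⟩ | ⟨hw1, hwx⟩ | hw1⟩
  · exact hy w ⟨hw, hw1⟩ hwy
  · exact hx w ⟨hw, eq_sub_of_add_eq hw1.symm⟩ hwx.symm
  · exact hi w hw hw1.symm

theorem surjOn_fst (hS : Maximal (Qgraph n).IsStableSet S) : Set.SurjOn Prod.fst S Set.univ := by
  intro i _
  by_contra! hi
  obtain ⟨v, rfl, hv⟩ := exists_forall_not_adj hS.1 i fun w hw h => hi ⟨w, hw, h⟩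
  exact hi ⟨v, mem_of_maximal_isStableSet hS hv, rfl⟩

end Qgraph

theorem Qgraph_wellCovered_general (n : ℕ)
    (S : Set (ZMod n × ZMod 2 × ZMod 2)) (hS : Maximal (Qgraph n).IsStableSet S) :
    S.ncard = n ∧ ∀ i : ZMod n, ∃! v, v ∈ S ∧ v.1 = i := by
  have hbij : Set.BijOn Prod.fst S Set.univ :=
    ⟨Set.mapsTo_univ _ _, Qgraph.injOn_fst hS.1, Qgraph.surjOn_fst hS⟩
  refine ⟨?_, fun i => ?_⟩
  · rw [← hbij.injOn.ncard_image, hbij.image_eq, Set.ncard_univ, Nat.card_zmod]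
  · obtain ⟨v, hv, rfl⟩ := hbij.surjOn (Set.mem_univ i)
    exact ⟨v, ⟨hv, rfl⟩, fun w ⟨hw, h⟩ => hbij.injOn hw hv h⟩

theorem Qgraph_wellCovered (n : ℕ) (hn : 4 ≤ n)
    (S : Set (ZMod n × ZMod 2 × ZMod 2)) (hS : Maximal (Qgraph n).IsStableSet S) :
    S.ncard = n ∧ ∀ i : ZMod n, ∃! v, v ∈ S ∧ v.1 = i :=
  Qgraph_wellCovered_general n S hS
end

section
/- For n ≥ 4, the graph Q_n is co-well-covered with clique number 4: every maximal clique of Q_n has size exactly 4. -/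
/-! A maximal clique of `Q_n` either lies in a single layer `{i} × Z₂ × Z₂`, and then is that
whole layer, or contains adjacent vertices `(i, x, y)` and `(i + 1, y, v)`. For `n ≥ 4` every
vertex adjacent or equal to both of these lies in the "bridge" `{(i, x', y)} ∪ {(i + 1, y, v')}`,
which is itself a clique, so the clique is that bridge. Layers and bridges both have four
vertices. -/

open SimpleGraph

variable {V : Type*}

theorem SimpleGraph.nonempty_of_maximal_isClique_s13 {α : Type*} [Nonempty α] {G : SimpleGraph α}
    {s : Set α} (hs : Maximal G.IsClique s) : s.Nonempty := by
  obtain ⟨v⟩ := ‹Nonempty α›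
  rw [Set.nonempty_iff_ne_empty]
  rintro rfl
  exact hs.2 (G.isClique_singleton v) (Set.empty_subset _) rfl

namespace Qgraph

variable {n : ℕ}

def layer (i : ZMod n) : Set (ZMod n × ZMod 2 × ZMod 2) := {p | p.1 = i}

def bridge (i : ZMod n) (y : ZMod 2) : Set (ZMod n × ZMod 2 × ZMod 2) :=
  {p | p.1 = i ∧ p.2.2 = y ∨ p.1 = i + 1 ∧ p.2.1 = y}

theorem isClique_layer (i : ZMod n) : (Qgraph n).IsClique (layer i) :=
  fun _ hp _ hq hpq => ⟨hpq, Or.inr (Or.inr (hp.trans hq.symm))⟩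

theorem isClique_bridge (i : ZMod n) (y : ZMod 2) : (Qgraph n).IsClique (bridge i y) := by
  rintro p (⟨hp1, hp2⟩ | ⟨hp1, hp2⟩) q (⟨hq1, hq2⟩ | ⟨hq1, hq2⟩) hpq <;>
    exact ⟨hpq, by grind⟩

theorem ncard_layer (i : ZMod n) : (layer i).ncard = 4 := by
  have hrange : layer i = Set.range (Prod.mk i : ZMod 2 × ZMod 2 → _) := by
    ext ⟨j, xy⟩
    simp [layer, eq_comm]
  rw [hrange, Set.ncard_range_of_injective (Prod.mk_right_injective i)]
  simp

theorem ncard_bridge (h1 : (1 : ZMod n) ≠ 0) (i : ZMod n) (y : ZMod 2) :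
    (bridge i y).ncard = 4 := by
  have hrange :
      bridge i y = Set.range (Sum.elim (fun x => (i, x, y)) (fun v => (i + 1, y, v))) := by
    ext ⟨j, x, v⟩
    simp only [bridge, Set.mem_ofPred_eq, Set.mem_range, Sum.exists, Sum.elim_inl, Sum.elim_inr,
      Prod.mk.injEq]
    grind
  rw [hrange, Set.ncard_range_of_injective]
  · simp
  · refine Function.Injective.sumElim (fun x x' h => by simpa using h)
      (fun v v' h => by simpa using h) fun x v h => ?_
    simp_all

theorem subset_bridge (h2 : (2 : ZMod n) ≠ 0) (h3 : (3 : ZMod n) ≠ 0)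
    {C : Set (ZMod n × ZMod 2 × ZMod 2)} (hC : (Qgraph n).IsClique C)
    {p q : ZMod n × ZMod 2 × ZMod 2} (hp : p ∈ C) (hq : q ∈ C)
    (hq1 : q.1 = p.1 + 1) (hq2 : q.2.1 = p.2.2) : C ⊆ bridge p.1 p.2.2 := by
  intro r hr
  rcases eq_or_ne r p with rfl | hrp
  · exact Or.inl ⟨rfl, rfl⟩
  rcases eq_or_ne r q with rfl | hrq
  · exact Or.inr ⟨hq1, hq2⟩
  obtain ⟨-, hadj_p⟩ := hC hr hp hrp
  obtain ⟨-, hadj_q⟩ := hC hr hq hrq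
  simp only [bridge, Set.mem_ofPred_eq]
  -- `r.1` is within one of both `p.1` and `p.1 + 1`; as `2, 3 ≠ 0` it is one of them, and
  -- adjacency to the vertex in the other layer fixes the shared coordinate.
  grind

theorem eq_layer_or_eq_bridge_of_maximal (h2 : (2 : ZMod n) ≠ 0) (h3 : (3 : ZMod n) ≠ 0)
    {C : Set (ZMod n × ZMod 2 × ZMod 2)} (hC : Maximal (Qgraph n).IsClique C) :
    (∃ i, C = layer i) ∨ ∃ i y, C = bridge i y := by
  obtain ⟨p, hp⟩ := nonempty_of_maximal_isClique_s13 hC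
  by_cases hCp : C ⊆ layer p.1
  · exact Or.inl ⟨p.1, hC.eq_of_subset (isClique_layer p.1) hCp⟩
  obtain ⟨q, hq, hqp⟩ := Set.not_subset.mp hCp
  have eq_bridge {a b} (ha : a ∈ C) (hb : b ∈ C) (hb1 : b.1 = a.1 + 1) (hb2 : b.2.1 = a.2.2) :
      C = bridge a.1 a.2.2 :=
    hC.eq_of_subset (isClique_bridge _ _) (subset_bridge h2 h3 hC.1 ha hb hb1 hb2)
  right
  obtain ⟨-, hfwd | hbwd | hsame⟩ := hC.1 hp hq (ne_of_apply_ne Prod.fst (Ne.symm hqp))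
  · exact ⟨p.1, p.2.2, eq_bridge hp hq hfwd.1 hfwd.2⟩
  · exact ⟨q.1, q.2.2, eq_bridge hq hp hbwd.1 hbwd.2⟩
  · exact absurd hsame.symm hqp

end Qgraph

theorem Qgraph_coWellCovered (n : ℕ) (hn : 4 ≤ n)
    (C : Set (ZMod n × ZMod 2 × ZMod 2)) (hC : Maximal (Qgraph n).IsClique C) :
    C.ncard = 4 := by
  have hk (k : ℕ) (hk0 : 0 < k) (hkn : k < n) : (k : ZMod n) ≠ 0 := by
    rw [Ne, ZMod.natCast_eq_zero_iff]
    exact fun h => (Nat.le_of_dvd hk0 h).not_gt hkn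
  have h1 : (1 : ZMod n) ≠ 0 := by exact_mod_cast hk 1 (by norm_num) (by omega)
  have h2 : (2 : ZMod n) ≠ 0 := by exact_mod_cast hk 2 (by norm_num) (by omega)
  have h3 : (3 : ZMod n) ≠ 0 := by exact_mod_cast hk 3 (by norm_num) (by omega)
  obtain ⟨i, rfl⟩ | ⟨i, y, rfl⟩ := Qgraph.eq_layer_or_eq_bridge_of_maximal h2 h3 hC
  · exact Qgraph.ncard_layer i
  · exact Qgraph.ncard_bridge h1 i y
end

section
/- If Γ is a connected, k-regular, well-covered, co-well-covered graph, then either ω(Γ) ≤ (2/3)(k+1) or Γ is a complete graph. -/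
open SimpleGraph

variable {V : Type*}

/-!
Suppose `3ω > 2(k+1)`. Two maximal cliques through a common vertex `v` both lie in the closed
neighbourhood of `v`, which has `k + 1` vertices, so they share at least `2ω - (k+1) > ω/2`
vertices. Hence two maximal cliques that both meet a third one meet each other, and following
walks in the connected graph, any two maximal cliques meet. Now fix a maximal clique `C` and
double count the edges between `C` and its complement: every outside vertex has at least
`2ω - (k+1)` neighbours in `C`, and every vertex of `C` has exactly `k + 1 - ω` neighbours
outside. Double counting non-edges shows `ω ≤ |Cᶜ|` in a non-complete regular graph, so
`2ω - (k+1) ≤ k + 1 - ω`, contradicting `3ω > 2(k+1)`.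
-/

theorem Set.ncard_mul_le_ncard_mul {α β : Type*} {s : Set α} {t : Set β}
    (r : α → β → Prop) {m n : ℕ} (hs : s.Finite) (ht : t.Finite)
    (hm : ∀ a ∈ s, m ≤ {b ∈ t | r a b}.ncard)
    (hn : ∀ b ∈ t, {a ∈ s | r a b}.ncard ≤ n) :
    s.ncard * m ≤ t.ncard * n := by
  classical
  obtain ⟨s, rfl⟩ := hs.exists_finset_coe
  obtain ⟨t, rfl⟩ := ht.exists_finset_coe
  simp only [Set.ncard_coe_finset]
  refine Finset.card_mul_le_card_mul r (fun a ha => ?_) (fun b hb => ?_)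
  · simpa only [← Set.ncard_coe_finset, Finset.coe_bipartiteAbove, Finset.mem_coe]
      using hm a ha
  · simpa only [← Set.ncard_coe_finset, Finset.coe_bipartiteBelow, Finset.mem_coe]
      using hn b hb

namespace SimpleGraph

variable {G : SimpleGraph V} {k : ℕ} {C D F : Set V} {v : V}

theorem IsClique.sdiff_singleton_subset_neighborSet (hC : G.IsClique C) (hv : v ∈ C) :
    C \ {v} ⊆ G.neighborSet v := fun _ hu => hC hv hu.1 (Ne.symm hu.2)

theorem ncard_eq_cliqueNum_of_maximal_isClique [Finite V]
    (hcwc : ∀ C D : Set V, Maximal G.IsClique C → Maximal G.IsClique D → C.ncard = D.ncard)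
    (hC : Maximal G.IsClique C) : C.ncard = G.cliqueNum := by
  obtain ⟨s, hs⟩ := G.maximumClique_exists
  rw [hcwc C s hC (hs.isMaximalClique s), Set.ncard_coe_finset,
    G.maximumClique_card_eq_cliqueNum s hs]

section Regular

variable [Finite V]

theorem ncard_insert_neighborSet (hreg : ∀ v, (G.neighborSet v).ncard = k) (v : V) :
    (insert v (G.neighborSet v)).ncard = k + 1 := by
  rw [Set.ncard_insert_of_notMem G.notMem_neighborSet_self, hreg]

theorem succ_lt_card_of_ne_top (hreg : ∀ v, (G.neighborSet v).ncard = k) (hG : G ≠ ⊤) :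
    k + 1 < Nat.card V := by
  obtain ⟨v, hv⟩ : ∃ v, ¬G.IsUniversal v := by
    simpa [eq_top_iff_forall_isUniversal] using hG
  rw [← ncard_insert_neighborSet hreg v]
  exact Set.ncard_lt_card (mt insert_neighborSet_eq_univ.1 hv)

theorem ncard_compl_insert_neighborSet (hreg : ∀ v, (G.neighborSet v).ncard = k) (v : V) :
    (insert v (G.neighborSet v))ᶜ.ncard = Nat.card V - (k + 1) := by
  rw [Set.ncard_compl, ncard_insert_neighborSet hreg]

theorem IsClique.ncard_union_le (hreg : ∀ v, (G.neighborSet v).ncard = k)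
    (hC : G.IsClique C) (hD : G.IsClique D) (hvC : v ∈ C) (hvD : v ∈ D) :
    (C ∪ D).ncard ≤ k + 1 := by
  have hCD : (C ∪ D) \ {v} ⊆ G.neighborSet v := Set.union_sdiff_distrib ▸
    Set.union_subset (hC.sdiff_singleton_subset_neighborSet hvC)
      (hD.sdiff_singleton_subset_neighborSet hvD)
  exact ncard_insert_neighborSet hreg v ▸
    Set.ncard_le_ncard (Set.sdiff_singleton_subset_iff.1 hCD)

theorem IsClique.ncard_neighborSet_sdiff (hreg : ∀ v, (G.neighborSet v).ncard = k)
    (hC : G.IsClique C) (hv : v ∈ C) : (G.neighborSet v \ C).ncard = k + 1 - C.ncard := by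
  rw [← Set.insert_sdiff_of_mem _ hv,
    Set.ncard_sdiff (Set.sdiff_singleton_subset_iff.1 (hC.sdiff_singleton_subset_neighborSet hv)),
    ncard_insert_neighborSet hreg]

theorem IsClique.ncard_le_ncard_compl (hreg : ∀ v, (G.neighborSet v).ncard = k)
    (hC : G.IsClique C) (hG : G ≠ ⊤) : C.ncard ≤ Cᶜ.ncard := by
  refine Nat.le_of_mul_le_mul_right (Set.ncard_mul_le_ncard_mul (fun v w => ¬G.Adj v w)
    (Set.toFinite C) (Set.toFinite Cᶜ) (fun v hv => ?_) (fun w hw => ?_))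
    (Nat.sub_pos_of_lt (succ_lt_card_of_ne_top hreg hG))
  · rw [← ncard_compl_insert_neighborSet hreg v]
    refine Set.ncard_le_ncard fun w hw => ⟨fun hwC => hw ?_, fun hvw => hw (Or.inr hvw)⟩
    exact Set.sdiff_singleton_subset_iff.1 (hC.sdiff_singleton_subset_neighborSet hv) hwC
  · rw [← ncard_compl_insert_neighborSet hreg w]
    refine Set.ncard_le_ncard fun v hv => ?_
    rintro (rfl | hwv)
    exacts [hw hv.1, hv.2 hwv.symm]

theorem two_mul_cliqueNum_le_ncard_inter_add (hreg : ∀ v, (G.neighborSet v).ncard = k)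
    (hω : ∀ C, Maximal G.IsClique C → C.ncard = G.cliqueNum)
    (hC : Maximal G.IsClique C) (hD : Maximal G.IsClique D) (hCD : (C ∩ D).Nonempty) :
    2 * G.cliqueNum ≤ (C ∩ D).ncard + (k + 1) := by
  obtain ⟨v, hvC, hvD⟩ := hCD
  have hunion := hC.1.ncard_union_le hreg hD.1 hvC hvD
  have hsum := Set.ncard_inter_add_ncard_union C D
  rw [hω C hC, hω D hD] at hsum
  omega

theorem maximal_isClique_inter_nonempty_trans (hreg : ∀ v, (G.neighborSet v).ncard = k)
    (hω : ∀ C, Maximal G.IsClique C → C.ncard = G.cliqueNum)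
    (hk : 2 * (k + 1) < 3 * G.cliqueNum) (hF : Maximal G.IsClique F)
    (hC : Maximal G.IsClique C) (hD : Maximal G.IsClique D)
    (hFC : (F ∩ C).Nonempty) (hFD : (F ∩ D).Nonempty) : (C ∩ D).Nonempty := by
  have hunion : (F ∩ C ∪ F ∩ D).ncard ≤ G.cliqueNum := hω F hF ▸
    Set.ncard_le_ncard (Set.union_subset Set.inter_subset_left Set.inter_subset_left)
  have hsum := Set.ncard_inter_add_ncard_union (F ∩ C) (F ∩ D)
  have hFC' := two_mul_cliqueNum_le_ncard_inter_add hreg hω hF hC hFC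
  have hFD' := two_mul_cliqueNum_le_ncard_inter_add hreg hω hF hD hFD
  obtain ⟨v, ⟨-, hvC⟩, -, hvD⟩ :=
    Set.nonempty_of_ncard_ne_zero (by omega : (F ∩ C ∩ (F ∩ D)).ncard ≠ 0)
  exact ⟨v, hvC, hvD⟩

theorem Connected.maximal_isClique_inter_nonempty (hconn : G.Connected)
    (hreg : ∀ v, (G.neighborSet v).ncard = k)
    (hω : ∀ C, Maximal G.IsClique C → C.ncard = G.cliqueNum)
    (hk : 2 * (k + 1) < 3 * G.cliqueNum)
    (hC : Maximal G.IsClique C) (hD : Maximal G.IsClique D) : (C ∩ D).Nonempty := by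
  obtain ⟨u, hu⟩ := Set.nonempty_of_ncard_ne_zero (by rw [hω C hC]; omega)
  obtain ⟨w, hw⟩ := Set.nonempty_of_ncard_ne_zero (by rw [hω D hD]; omega)
  obtain ⟨p⟩ := hconn u w
  induction p generalizing C with
  | nil => exact ⟨_, hu, hw⟩
  | cons hab p ih =>
    obtain ⟨F, hpair, hF⟩ := Finite.exists_le_maximal (G.isClique_pair.2 fun _ => hab)
    exact maximal_isClique_inter_nonempty_trans hreg hω hk hF hC hD ⟨_, hpair (by simp), hu⟩
      (ih hF (hpair (by simp)) hw)

theorem ncard_compl_mul_le_of_maximal_isClique (hreg : ∀ v, (G.neighborSet v).ncard = k)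
    (hω : ∀ C, Maximal G.IsClique C → C.ncard = G.cliqueNum) (hC : Maximal G.IsClique C)
    (hmeet : ∀ F, Maximal G.IsClique F → (F ∩ C).Nonempty) :
    Cᶜ.ncard * (2 * G.cliqueNum - (k + 1)) ≤ G.cliqueNum * (k + 1 - G.cliqueNum) := by
  rw [← hω C hC]
  refine Set.ncard_mul_le_ncard_mul G.Adj (Set.toFinite _) (Set.toFinite _)
    (fun w hw => ?_) (fun v hv => ?_)
  · obtain ⟨F, hwF, hF⟩ := Finite.exists_le_maximal (G.isClique_singleton w)
    have hFC : F ∩ C ⊆ {v ∈ C | G.Adj w v} := fun v hv =>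
      ⟨hv.2, hF.1 (hwF rfl) hv.1 fun hwv => hw (hwv ▸ hv.2)⟩
    have hinter := two_mul_cliqueNum_le_ncard_inter_add hreg hω hF hC (hmeet F hF)
    have hadj := Set.ncard_le_ncard hFC
    rw [← hω C hC] at hinter
    omega
  · have hN : {w ∈ Cᶜ | G.Adj w v} = G.neighborSet v \ C := by
      ext w
      simp [adj_comm, and_comm]
    rw [hN, hC.1.ncard_neighborSet_sdiff hreg hv]

end Regular

end SimpleGraph

theorem wellCovered_coWellCovered_cliqueNum_bound_general (G : SimpleGraph V) [Fintype V]
    (hconn : G.Connected) (k : ℕ)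
    (hreg : ∀ v : V, (G.neighborSet v).ncard = k)
    (hcwc : ∀ C D : Set V, Maximal G.IsClique C → Maximal G.IsClique D →
      C.ncard = D.ncard) :
    3 * G.cliqueNum ≤ 2 * (k + 1) ∨ G = ⊤ := by
  by_contra! ⟨hk, hG⟩
  have hω (C : Set V) (hC : Maximal G.IsClique C) : C.ncard = G.cliqueNum :=
    ncard_eq_cliqueNum_of_maximal_isClique hcwc hC
  obtain ⟨C, -, hC⟩ := Finite.exists_le_maximal G.isClique_empty
  have hedges := ncard_compl_mul_le_of_maximal_isClique hreg hω hC fun F hF =>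
    hconn.maximal_isClique_inter_nonempty hreg hω hk hF hC
  have hhalf := hC.1.ncard_le_ncard_compl hreg hG
  rw [hω C hC] at hhalf
  have hgap : 2 * G.cliqueNum - (k + 1) ≤ k + 1 - G.cliqueNum :=
    Nat.le_of_mul_le_mul_left ((Nat.mul_le_mul_right _ hhalf).trans hedges) (by omega)
  omega

theorem wellCovered_coWellCovered_cliqueNum_bound (G : SimpleGraph V) [Fintype V]
    (hconn : G.Connected) (k : ℕ)
    (hreg : ∀ v : V, (G.neighborSet v).ncard = k)
    (hwc : ∀ S T : Set V, Maximal G.IsStableSet S → Maximal G.IsStableSet T →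
      S.ncard = T.ncard)
    (hcwc : ∀ C D : Set V, Maximal G.IsClique C → Maximal G.IsClique D →
      C.ncard = D.ncard) :
    3 * G.cliqueNum ≤ 2 * (k + 1) ∨ G = ⊤ :=
  wellCovered_coWellCovered_cliqueNum_bound_general G hconn k hreg hcwc
end
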